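/- For every k, the (2k+2)-nd iterate of the step function on init_k equals the configuration (Q3, fun _ => false, 1); that is, after exactly 2k+2 steps the machine M halts in state Q3 with an all-zero tape, scanning the second tape cell. -/

import Mathlib

/-- Configurations of the 3-state Turing machine: (state, tape, head position). -/
abbrev Config : Type := Fin 3 × (ℕ → Bool) × ℕ

/-- The total step function of the machine M. State 0 = Q1, 1 = Q2, 2 = Q3 (halt). -/
def step (c : Config) : Config :=
  match c with
  | (q, T, p) =>
    if q = 0 then (if T p then (0, T, p + 1) else (1, T, p - 1))
    else if q = 1 then
      (if T p then (1, Function.update T p false, p - 1) else (2, T, p + 1))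
    else (2, T, p)

/-- The input tape 0 1^k 0 0 ⋯ : cell i holds 1 iff 1 ≤ i ≤ k. -/
def tape (k : ℕ) : ℕ → Bool := fun i => decide (1 ≤ i ∧ i ≤ k)

/-- Initial configuration on input 0 1^k: state Q1, scanning cell 1. -/
def init (k : ℕ) : Config := (0, tape k, 1)

/-!
In state Q1 the head runs right over the block of `k` ones and turns back at the first blank
(`k + 1` steps). In state Q2 it then walks left erasing one `1` per step, and after `k` erasures
it reads the blank in cell 0 and halts one cell to the right (`k + 1` steps).
-/

lemma tape_zero : tape 0 = fun _ => false := by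
  funext i
  simp only [tape, decide_eq_false_iff_not]
  omega

lemma update_tape_succ (m : ℕ) : Function.update (tape (m + 1)) (m + 1) false = tape m := by
  funext i
  rcases eq_or_ne i (m + 1) with rfl | hi
  · simp [tape]
  · simp only [Function.update_of_ne hi, tape, decide_eq_decide]
    omega

lemma step_iterate_of_forall_eq_true (T : ℕ → Bool) (p j : ℕ) (hT : ∀ i < j, T (p + i) = true) :
    step^[j] (0, T, p) = (0, T, p + j) := by
  induction j with
  | zero => rfl
  | succ j ih =>
    rw [Function.iterate_succ_apply', ih fun i hi => hT i (by omega)]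
    simp [step, hT j j.lt_succ_self, add_assoc]

lemma step_iterate_init (k : ℕ) : step^[k + 1] (init k) = (1, tape k, k) := by
  have hscan : step^[k] (init k) = (0, tape k, 1 + k) :=
    step_iterate_of_forall_eq_true _ _ _ fun i hi => by simp only [tape, decide_eq_true_eq]; omega
  have hblank : tape k (1 + k) = false := by simp [tape]
  rw [Function.iterate_succ_apply', hscan]
  simp [step, hblank]

lemma step_iterate_erase (m : ℕ) : step^[m + 1] (1, tape m, m) = (2, fun _ => false, 1) := by
  induction m with
  | zero => simp [step, tape_zero]
  | succ m ih =>
    have hone : tape (m + 1) (m + 1) = true := by simp [tape]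
    have herase : step (1, tape (m + 1), m + 1) = (1, tape m, m) := by
      simp [step, hone, update_tape_succ m]
    rw [Function.iterate_succ_apply, herase, ih]

/-- After exactly 2k+2 steps, M halts in state Q3 with an all-zero tape,
scanning the second tape cell. -/
theorem halts_at (k : ℕ) :
    step^[2 * k + 2] (init k) = (2, fun _ => false, 1) := by
  rw [show 2 * k + 2 = (k + 1) + (k + 1) by omega, Function.iterate_add_apply,
    step_iterate_init, step_iterate_erase]
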